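/- Let f be continuous and strictly quasi-convex on a compact convex set D ⊆ ℝ^d that is not a singleton, and let F ∈ (0,1). For ε > 0 small enough, the minimum value δ(ε) of g(y₁,y₂) = f(y₂) - f(F·y₁ + (1-F)·y₂) over the set of pairs (y₁,y₂) ∈ D × D with ‖y₁ - y₂‖ ≥ ε and f(y₁) ≤ f(y₂) exists and is strictly positive. -/

import Mathlib

/-!
The feasible pairs form a compact set (closed conditions inside `D × D`), nonempty as soon as
`ε` is at most the distance between two points of `D`, and on it the gap
`g (y₁, y₂) = f y₂ - f (F • y₁ + (1 - F) • y₂)` is continuous, so it attains its minimum.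
Since `ε > 0` forces `y₁ ≠ y₂`, strict quasi-convexity together with `f y₁ ≤ f y₂` makes `g`
positive at every feasible pair, in particular at the minimiser.
-/

open Set

variable {E : Type*} [NormedAddCommGroup E]

def feasiblePairs (D : Set E) (f : E → ℝ) (ε : ℝ) : Set (E × E) :=
  {p ∈ {p ∈ D ×ˢ D | ε ≤ ‖p.1 - p.2‖} | f p.1 ≤ f p.2}

variable {D : Set E} {f : E → ℝ} {ε F : ℝ}

theorem mem_feasiblePairs {y₁ y₂ : E} :
    (y₁, y₂) ∈ feasiblePairs D f ε ↔ y₁ ∈ D ∧ y₂ ∈ D ∧ ε ≤ ‖y₁ - y₂‖ ∧ f y₁ ≤ f y₂ :=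
  ⟨fun ⟨⟨⟨h₁, h₂⟩, hdist⟩, hle⟩ => ⟨h₁, h₂, hdist, hle⟩,
    fun ⟨h₁, h₂, hdist, hle⟩ => ⟨⟨⟨h₁, h₂⟩, hdist⟩, hle⟩⟩

theorem isCompact_feasiblePairs (hD : IsCompact D) (hf : ContinuousOn f D) :
    IsCompact (feasiblePairs D f ε) := by
  have hDD : IsCompact (D ×ˢ D) := hD.prod hD
  have hclosed : IsClosed (feasiblePairs D f ε) :=
    (hDD.isClosed.isClosed_le continuousOn_const (by fun_prop)).isClosed_le
      (hf.comp continuousOn_fst fun _ hp => hp.1.1)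
      (hf.comp continuousOn_snd fun _ hp => hp.1.2)
  exact hDD.of_isClosed_subset hclosed fun _ hp => hp.1.1

theorem feasiblePairs_nonempty {a b : E} (ha : a ∈ D) (hb : b ∈ D) (hε : ε ≤ ‖a - b‖) :
    (feasiblePairs D f ε).Nonempty := by
  rcases le_total (f a) (f b) with hab | hba
  · exact ⟨(a, b), mem_feasiblePairs.2 ⟨ha, hb, hε, hab⟩⟩
  · exact ⟨(b, a), mem_feasiblePairs.2 ⟨hb, ha, norm_sub_rev a b ▸ hε, hba⟩⟩

variable [NormedSpace ℝ E]

def convexGap (f : E → ℝ) (F : ℝ) (p : E × E) : ℝ :=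
  f p.2 - f (F • p.1 + (1 - F) • p.2)

theorem continuousOn_convexGap (hDconv : Convex ℝ D) (hf : ContinuousOn f D)
    (hF : F ∈ Icc (0 : ℝ) 1) : ContinuousOn (convexGap f F) (feasiblePairs D f ε) := by
  have hmaps : MapsTo (fun p : E × E => F • p.1 + (1 - F) • p.2) (feasiblePairs D f ε) D :=
    fun _ hp => hDconv hp.1.1.1 hp.1.1.2 hF.1 (sub_nonneg.2 hF.2) (add_sub_cancel F 1)
  exact (hf.comp continuousOn_snd fun _ hp => hp.1.1.2).sub
    (hf.comp (by fun_prop) hmaps)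

theorem convexGap_pos_of_mem_feasiblePairs
    (hq : ∀ x ∈ D, ∀ y ∈ D, x ≠ y → ∀ t ∈ Ioo (0 : ℝ) 1,
      f (t • x + (1 - t) • y) < max (f x) (f y))
    (hF : F ∈ Ioo (0 : ℝ) 1) (hε : 0 < ε) {p : E × E} (hp : p ∈ feasiblePairs D f ε) :
    0 < convexGap f F p := by
  obtain ⟨⟨⟨h₁, h₂⟩, hdist⟩, hle⟩ := hp
  have hne : p.1 ≠ p.2 := fun h => by
    rw [h, sub_self, norm_zero] at hdist
    exact hdist.not_gt hε
  have := hq p.1 h₁ p.2 h₂ hne F hF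
  rw [max_eq_right hle] at this
  exact sub_pos.2 this

/-- Lemma II.1: minimum of g over the feasible region exists and is positive. -/
theorem stmt_0 {d : ℕ} (D : Set (EuclideanSpace ℝ (Fin d)))
    (hDc : IsCompact D) (hDconv : Convex ℝ D) (hDnt : D.Nontrivial)
    (f : EuclideanSpace ℝ (Fin d) → ℝ) (hf : ContinuousOn f D)
    (hq : ∀ x ∈ D, ∀ y ∈ D, x ≠ y → ∀ t ∈ Set.Ioo (0:ℝ) 1,
        f (t • x + (1 - t) • y) < max (f x) (f y))
    (F : ℝ) (hF : F ∈ Set.Ioo (0:ℝ) 1) :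
    ∃ ε₀ > 0, ∀ ε : ℝ, 0 < ε → ε ≤ ε₀ →
      ∃ δ > 0,
        (∃ y₁ ∈ D, ∃ y₂ ∈ D, ε ≤ ‖y₁ - y₂‖ ∧ f y₁ ≤ f y₂ ∧
          f y₂ - f (F • y₁ + (1 - F) • y₂) = δ) ∧
        (∀ y₁ ∈ D, ∀ y₂ ∈ D, ε ≤ ‖y₁ - y₂‖ → f y₁ ≤ f y₂ →
          δ ≤ f y₂ - f (F • y₁ + (1 - F) • y₂)) := by
  obtain ⟨a, ha, b, hb, hab⟩ := hDnt
  refine ⟨‖a - b‖, norm_pos_iff.2 (sub_ne_zero.2 hab), fun ε hε hεab => ?_⟩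
  obtain ⟨p, hp, hmin⟩ := (isCompact_feasiblePairs (ε := ε) hDc hf).exists_isMinOn
    (feasiblePairs_nonempty ha hb hεab) (continuousOn_convexGap hDconv hf (Ioo_subset_Icc_self hF))
  obtain ⟨h₁, h₂, hdist, hle⟩ := mem_feasiblePairs.1 hp
  exact ⟨convexGap f F p, convexGap_pos_of_mem_feasiblePairs hq hF hε hp,
    ⟨p.1, h₁, p.2, h₂, hdist, hle, rfl⟩,
    fun y₁ h₁ y₂ h₂ hdist hle => hmin (mem_feasiblePairs.2 ⟨h₁, h₂, hdist, hle⟩)⟩
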